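/- If M is a weakly round matroid and e ∈ E(M), then M/e (the contraction of e) is weakly round. -/

import Mathlib

open Matroid Set

namespace GrowthRate

variable {α : Type*}

/-- The rank of a set in a matroid: the supremum of cardinalities of independent subsets. -/
noncomputable def eRk (M : Matroid α) (X : Set α) : ℕ∞ :=
  ⨆ I ∈ {I : Set α | M.Indep I ∧ I ⊆ X}, I.encard

/-- The rank of a matroid. -/
noncomputable def eRank (M : Matroid α) : ℕ∞ := eRk M M.E

/-- Rank as a natural number (for finite matroids). -/
noncomputable def rk (M : Matroid α) (X : Set α) : ℕ := (eRk M X).toNat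

/-- Rank of a matroid as a natural number. -/
noncomputable def rank (M : Matroid α) : ℕ := (eRank M).toNat

/-- Deletion of a set of elements. -/
noncomputable def delete (M : Matroid α) (D : Set α) : Matroid α := M ↾ (M.E \ D)

/-- Contraction of a set of elements, defined via duality. -/
noncomputable def contract (M : Matroid α) (C : Set α) : Matroid α := (delete M✶ C)✶

/-- `N` is a minor of `M` if it is obtained by a contraction followed by a deletion. -/
def IsMinor (N M : Matroid α) : Prop := ∃ C D : Set α, N = delete (contract M C) D

/-- The number of points (rank-one flats) of `M` contained in `X`. -/
noncomputable def nPoints (M : Matroid α) (X : Set α) : ℕ :=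
  {P : Set α | M.IsFlat P ∧ eRk M P = 1 ∧ P ⊆ X}.ncard

/-- `ε(M)`: the number of points (rank-one flats) of `M`. -/
noncomputable def eps (M : Matroid α) : ℕ := {P : Set α | M.IsFlat P ∧ eRk M P = 1}.ncard

/-- A matroid is simple if all singletons and pairs of ground elements are independent. -/
def Simple (M : Matroid α) : Prop :=
  ∀ e ∈ M.E, ∀ f ∈ M.E, M.Indep {e} ∧ (e ≠ f → M.Indep {e, f})

/-- `M` has a `U_{2,m}`-minor: a minor that is simple of rank two with `m` elements. -/
def HasUnifLineMinor (M : Matroid α) (m : ℕ) : Prop :=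
  ∃ N : Matroid α, IsMinor N M ∧ eRank N = 2 ∧ Simple N ∧ N.E.encard = m

/-- A matroid is weakly round if its ground set is not the union of a set of rank
at most `r(M)-2` and a set of rank at most `r(M)-1`. -/
def WeaklyRound (M : Matroid α) : Prop :=
  ¬ ∃ A B : Set α, A ∪ B = M.E ∧ eRk M A + 2 ≤ eRank M ∧ eRk M B + 1 ≤ eRank M

/-- `q` is a prime power. -/
def IsPrimePower (q : ℕ) : Prop := ∃ p n : ℕ, p.Prime ∧ 0 < n ∧ q = p ^ n

/-- `M` is isomorphic to the projective geometry `PG(n-1, |F|)` over the finite field `F`: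
there is a representation `f` of `M` by vectors in `F^n` such that distinct elements get
non-parallel vectors and every direction in `F^n` is represented. -/
def IsPG (M : Matroid α) (F : Type) [Field F] [Fintype F] (n : ℕ) : Prop :=
  ∃ f : α → (Fin n → F),
    (∀ I ⊆ M.E, (M.Indep I ↔ LinearIndependent F (fun x : I => f x))) ∧
    (∀ e ∈ M.E, ∀ e' ∈ M.E, ∀ c : F, f e' = c • f e → e = e') ∧
    (∀ v : Fin n → F, v ≠ 0 → ∃ e ∈ M.E, ∃ c : F, c ≠ 0 ∧ v = c • f e)

/-- `M` is `(q,k)`-overfull. -/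
noncomputable def Overfull (M : Matroid α) (q k : ℕ) : Prop :=
  ((q : ℚ) ^ (rank M + k) - 1) / ((q : ℚ) - 1)
      - (q : ℚ) * ((q : ℚ) ^ (2 * k) - 1) / ((q : ℚ) ^ 2 - 1) < (eps M : ℚ)

/-! Contracting `C` shifts ranks uniformly: `r_{M/C}(X) + r_M(C) = r_M(X ∪ C)`, and in
particular `r(M/C) + r_M(C) = r(M)`. Hence a cover `A ∪ B` of `E(M/C)` with `r_{M/C}(A) ≤ r(M/C) - 2`
and `r_{M/C}(B) ≤ r(M/C) - 1` lifts to the cover `(A ∪ C) ∪ (B ∪ C)` of `E(M)` with the same rank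
deficits. -/

theorem _root_.Matroid.eRk_contract_add_eRk (M : Matroid α) (C X : Set α) :
    (M ／ C).eRk X + M.eRk C = M.eRk (X ∪ C) := by
  obtain ⟨J, hJ⟩ := M.exists_isBasis' C
  obtain ⟨I, hI, hJI⟩ := hJ.indep.subset_isBasis'_of_subset (hJ.subset.trans subset_union_right)
  have hIC : I ∩ C = J :=
    (hJ.eq_of_subset_indep (hI.indep.inter_right C) (subset_inter hJI hJ.subset)
      inter_subset_right).symm
  have hbasis : (M ／ C).IsBasis' (I \ C) ((X ∪ C) \ C) :=
    hI.contract_isBasis' hJ (hI.indep.subset (union_subset sdiff_subset hJI))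
  have hX : (M ／ C).eRk ((X ∪ C) \ C) = (M ／ C).eRk X := by
    rw [← eRk_inter_ground, contract_ground, eq_comm, ← eRk_inter_ground, contract_ground]
    congr 1
    tauto_set
  rw [← hX, hbasis.eRk_eq_encard, hJ.eRk_eq_encard, hI.eRk_eq_encard, ← hIC,
    encard_sdiff_add_encard_inter]

theorem _root_.Matroid.eRank_contract_add_eRk (M : Matroid α) (C : Set α) :
    (M ／ C).eRank + M.eRk C = M.eRank := by
  rw [← eRk_ground, eRk_contract_add_eRk, contract_ground, sdiff_union_self, eRk_ground_union]

theorem eRk_eq_eRk (M : Matroid α) (X : Set α) : eRk M X = M.eRk X := by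
  refine le_antisymm (iSup₂_le fun I hI ↦ hI.1.encard_le_eRk_of_subset hI.2) ?_
  obtain ⟨I, hI⟩ := M.exists_isBasis' X
  exact hI.eRk_eq_encard ▸ le_iSup₂_of_le I ⟨hI.indep, hI.subset⟩ le_rfl

theorem eRank_eq_eRank (M : Matroid α) : eRank M = M.eRank := by
  rw [eRank, eRk_eq_eRk, eRk_ground]

theorem contract_eq_contract (M : Matroid α) (C : Set α) : contract M C = M ／ C := rfl

theorem weaklyRound_iff {M : Matroid α} : WeaklyRound M ↔
    ¬ ∃ A B : Set α, A ∪ B = M.E ∧ M.eRk A + 2 ≤ M.eRank ∧ M.eRk B + 1 ≤ M.eRank := by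
  simp only [WeaklyRound, eRk_eq_eRk, eRank_eq_eRank]

theorem WeaklyRound.contract {M : Matroid α} (hM : WeaklyRound M) (C : Set α) :
    WeaklyRound (contract M C) := by
  rw [weaklyRound_iff] at hM
  rw [weaklyRound_iff, contract_eq_contract]
  rintro ⟨A, B, hAB, hA, hB⟩
  have hle {X : Set α} {k : ℕ∞} (hX : (M ／ C).eRk X + k ≤ (M ／ C).eRank) :
      M.eRk ((X ∪ C) ∩ M.E) + k ≤ M.eRank := by
    rw [eRk_inter_ground, ← eRk_contract_add_eRk, ← eRank_contract_add_eRk M C, add_right_comm]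
    exact add_le_add_left hX _
  refine hM ⟨(A ∪ C) ∩ M.E, (B ∪ C) ∩ M.E, ?_, hle hA, hle hB⟩
  rw [contract_ground] at hAB
  rw [← union_inter_distrib_right, ← union_union_distrib_right, hAB, sdiff_union_self,
    union_inter_cancel_left]

theorem statement_3_general {α : Type*} (M : Matroid α) (hM : WeaklyRound M) (e : α) :
    WeaklyRound (contract M {e}) :=
  hM.contract {e}

/-- Contracting an element of a weakly round matroid yields a weakly round matroid. -/
theorem statement_3 {α : Type*} (M : Matroid α) (hM : WeaklyRound M) (e : α)
    (he : e ∈ M.E) : WeaklyRound (contract M {e}) :=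
  statement_3_general M hM e

end GrowthRate
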